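/- Let f : ℝ^{d×n} → ℝ^{d×m} satisfy f(QX) = Q f(X) for every orthogonal matrix Q ∈ ℝ^{d×d}. Then there exists a function g from n×n matrices to n×m matrices such that f(X) = X · g(XᵀX) for all X ∈ ℝ^{d×n}. -/

import Mathlib

/-!
If `Xᵀ X = Yᵀ Y`, then `Xv ↦ Yv` is a well-defined isometry on the column space of `X`; extended to
the whole space it gives an orthogonal `Q` with `Y = Q X`. The reflection across the column space of
`X` fixes `X`, hence by equivariance also `f X`, so the columns of `f X` lie in that column space:
`f X = X A_X`. Then `f Y = Q X A_X = Y A_X`, so `g (S) := A_X` for any `X` with `Xᵀ X = S` works.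
-/

open Matrix

theorem LinearMap.exists_linearIsometry_comp_eq_of_norm_eq {𝕜 V E : Type*} [RCLike 𝕜]
    [AddCommGroup V] [Module 𝕜 V] [NormedAddCommGroup E] [InnerProductSpace 𝕜 E]
    [FiniteDimensional 𝕜 E] {A B : V →ₗ[𝕜] E} (h : ∀ v, ‖A v‖ = ‖B v‖) :
    ∃ T : E →ₗᵢ[𝕜] E, T.toLinearMap ∘ₗ A = B := by
  have hker : ker A ≤ ker B := fun v hv => by
    rw [mem_ker, ← norm_eq_zero, ← h, norm_eq_zero]
    exact hv
  let L₀ : range A →ₗ[𝕜] E := (ker A).liftQ B hker ∘ₗ A.quotKerEquivRange.symm.toLinearMap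
  have hL₀ (v : V) : L₀ ⟨A v, mem_range_self A v⟩ = B v := by
    simp [L₀, A.quotKerEquivRange_symm_apply_image v (mem_range_self A v)]
  let L : range A →ₗᵢ[𝕜] E := ⟨L₀, by rintro ⟨_, v, rfl⟩; simp [hL₀, h]⟩
  exact ⟨L.extend, LinearMap.ext fun v =>
    (L.extend_apply ⟨A v, mem_range_self A v⟩).trans (hL₀ v)⟩

theorem Matrix.exists_mul_eq_of_range_le {R ι κ μ : Type*} [CommRing R] [Fintype κ] [Fintype μ]
    [DecidableEq μ] {X : Matrix ι κ R} {Y : Matrix ι μ R}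
    (h : LinearMap.range Y.mulVecLin ≤ LinearMap.range X.mulVecLin) :
    ∃ A : Matrix κ μ R, X * A = Y := by
  obtain ⟨F, hF⟩ := Module.projective_lifting_property X.mulVecLin.rangeRestrict
    (Y.mulVecLin.codRestrict _ fun v => h ⟨v, rfl⟩) X.mulVecLin.surjective_rangeRestrict
  refine ⟨LinearMap.toMatrix' F, toLin'.injective (LinearMap.ext fun v => ?_)⟩
  rw [toLin'_apply, toLin'_apply, ← mulVec_mulVec, LinearMap.toMatrix'_mulVec]
  exact congr_arg Subtype.val (LinearMap.congr_fun hF v)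

namespace Matrix

variable {𝕜 ι κ μ : Type*} [RCLike 𝕜] [Fintype ι] [DecidableEq ι] [Fintype κ] [DecidableEq κ]
  [Fintype μ] [DecidableEq μ]

theorem toEuclideanLin_symm_mem_unitaryGroup
    (T : EuclideanSpace 𝕜 ι →ₗᵢ[𝕜] EuclideanSpace 𝕜 ι) :
    toEuclideanLin.symm T.toLinearMap ∈ unitaryGroup ι 𝕜 := by
  rw [mem_unitaryGroup_iff', star_eq_conjTranspose]
  apply toEuclideanLin.injective
  refine LinearMap.ext fun v => ext_inner_left 𝕜 fun u => ?_
  simp [toEuclideanLin_conjTranspose_eq_adjoint]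

theorem norm_toEuclideanLin_eq_of_conjTranspose_mul_self_eq {X Y : Matrix ι κ 𝕜}
    (h : Xᴴ * X = Yᴴ * Y) (v : EuclideanSpace 𝕜 κ) :
    ‖toEuclideanLin X v‖ = ‖toEuclideanLin Y v‖ := by
  have norm_sq (Z : Matrix ι κ 𝕜) :
      ‖toEuclideanLin Z v‖ ^ 2 = RCLike.re (inner 𝕜 (toEuclideanLin (Zᴴ * Z) v) v) := by
    simp [toEuclideanLin_conjTranspose_eq_adjoint, LinearMap.adjoint_inner_left]
  rw [← sq_eq_sq₀ (norm_nonneg _) (norm_nonneg _), norm_sq, norm_sq, h]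

theorem exists_mem_unitaryGroup_mul_eq_of_conjTranspose_mul_self_eq {X Y : Matrix ι κ 𝕜}
    (h : Xᴴ * X = Yᴴ * Y) : ∃ Q ∈ unitaryGroup ι 𝕜, Q * X = Y := by
  obtain ⟨T, hT⟩ := LinearMap.exists_linearIsometry_comp_eq_of_norm_eq
    (norm_toEuclideanLin_eq_of_conjTranspose_mul_self_eq h)
  refine ⟨_, toEuclideanLin_symm_mem_unitaryGroup T, toEuclideanLin.injective ?_⟩
  simp [hT]

theorem exists_mul_eq_of_forall_mem_unitaryGroup {X : Matrix ι κ 𝕜} {Y : Matrix ι μ 𝕜}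
    (h : ∀ Q ∈ unitaryGroup ι 𝕜, Q * X = X → Q * Y = Y) : ∃ A : Matrix κ μ 𝕜, X * A = Y := by
  let U := LinearMap.range (toEuclideanLin X)
  let Q := toEuclideanLin.symm U.reflection.toLinearIsometry.toLinearMap
  have hQ : Q ∈ unitaryGroup ι 𝕜 := toEuclideanLin_symm_mem_unitaryGroup _
  have hQX : Q * X = X := toEuclideanLin.injective <| LinearMap.ext fun v => by
    simpa [Q] using U.reflection_mem_subspace_eq_self (LinearMap.mem_range_self _ v)
  have hQY := congr_arg toEuclideanLin (h Q hQ hQX)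
  refine exists_mul_eq_of_range_le ?_
  rintro _ ⟨v, rfl⟩
  have hYv : toEuclideanLin Y (WithLp.toLp 2 v) ∈ U := (U.reflection_eq_self_iff _).1 <| by
    simpa [Q] using LinearMap.congr_fun hQY (WithLp.toLp 2 v)
  obtain ⟨w, hw⟩ := hYv
  exact ⟨WithLp.ofLp w, by simpa using congr_arg WithLp.ofLp hw⟩

end Matrix

theorem orth_equivariant_representation_general (d n m : ℕ)
    (f : Matrix (Fin d) (Fin n) ℝ → Matrix (Fin d) (Fin m) ℝ)
    (hf : ∀ (Q : Matrix (Fin d) (Fin d) ℝ) (X : Matrix (Fin d) (Fin n) ℝ),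
      Qᵀ * Q = 1 → f (Q * X) = Q * f X) :
    ∃ g : Matrix (Fin n) (Fin n) ℝ → Matrix (Fin n) (Fin m) ℝ,
      ∀ X : Matrix (Fin d) (Fin n) ℝ, f X = X * g (Xᵀ * X) := by
  classical
  have hf' (Q X) (hQ : Q ∈ orthogonalGroup (Fin d) ℝ) : f (Q * X) = Q * f X :=
    hf Q X ((mem_orthogonalGroup_iff' _ _).1 hQ)
  choose A hA using fun X => exists_mul_eq_of_forall_mem_unitaryGroup (Y := f X)
    fun Q hQ hQX => by rw [← hf' Q X hQ, hQX]
  refine ⟨fun S => if h : ∃ Y : Matrix (Fin d) (Fin n) ℝ, Yᵀ * Y = S then A h.choose else 0,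
    fun X => ?_⟩
  have hS : ∃ Y : Matrix (Fin d) (Fin n) ℝ, Yᵀ * Y = Xᵀ * X := ⟨X, rfl⟩
  obtain ⟨Q, hQ, hQY⟩ := exists_mem_unitaryGroup_mul_eq_of_conjTranspose_mul_self_eq
    (X := hS.choose) (Y := X)
    (by simpa only [conjTranspose_eq_transpose_of_trivial] using hS.choose_spec)
  calc f X = Q * f hS.choose := by rw [← hf' _ _ hQ, hQY]
    _ = X * A hS.choose := by rw [← hA, ← Matrix.mul_assoc, hQY]
    _ = _ := by simp only [dif_pos hS]

/-- Proposition 1: an orthogonal equivariant `f : ℝ^{d×n} → ℝ^{d×m}` can be written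
as `f(X) = X g(XᵀX)` for some function `g`. -/
theorem orth_equivariant_representation (d n m : ℕ) (hd : 0 < d) (hn : 0 < n) (hm : 0 < m)
    (f : Matrix (Fin d) (Fin n) ℝ → Matrix (Fin d) (Fin m) ℝ)
    (hf : ∀ (Q : Matrix (Fin d) (Fin d) ℝ) (X : Matrix (Fin d) (Fin n) ℝ),
      Qᵀ * Q = 1 → f (Q * X) = Q * f X) :
    ∃ g : Matrix (Fin n) (Fin n) ℝ → Matrix (Fin n) (Fin m) ℝ,
      ∀ X : Matrix (Fin d) (Fin n) ℝ, f X = X * g (Xᵀ * X) :=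
  orth_equivariant_representation_general d n m f hf
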